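/- The supremum over τ ∈ ℝ of g(τ) equals c₂² · max_{h ∈ [−1,1]} S(h). Moreover, if (d₁, c₁·d₄) ≠ (0, 0), then this maximum of S on [−1, 1] is attained at some interior point h* ∈ (−1, 1) satisfying P(h*) = 0 (S vanishes at h = ±1, and S′(h) = 2(1 − h²)P(h)). -/

import Mathlib

/-!
Differentiating the sigmoids gives `φ′ = c₁c₂(1 − tanh²)` and `v′ = d₁c₂(1 − tanh²)`, so
`g(τ) = c₂² · S(tanh(c₂τ − c₃))`, and for `c₂ ≠ 0` the argument `tanh(c₂τ − c₃)` sweeps out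
exactly `(−1, 1)`. Since `S ≥ 0` and `S(±1) = 0`, the maximum of `S` on `[−1, 1]` is attained at
an interior point `h*`; hence the supremum of `g` is attained and equals `c₂² S(h*)`, and at `h*`
the derivative `S′(h) = 2(1 − h²)P(h)` vanishes with `1 − h*² > 0`, so `P(h*) = 0`.
-/

open Real Set

theorem Real.hasDerivAt_tanh (x : ℝ) : HasDerivAt tanh (1 - tanh x ^ 2) x := by
  have hcosh : cosh x ≠ 0 := (cosh_pos x).ne'
  have h := (hasDerivAt_sinh x).div (hasDerivAt_cosh x) hcosh
  rw [show tanh = sinh / cosh from funext tanh_eq_sinh_div_cosh]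
  refine h.congr_deriv ?_
  rw [Pi.div_apply]
  field_simp

theorem Real.range_tanh : range tanh = Ioo (-1) 1 := by
  simpa using tanh_bijOn.image_eq

theorem range_tanh_mul_sub {c : ℝ} (hc : c ≠ 0) (b : ℝ) :
    range (fun τ => tanh (c * τ - b)) = Ioo (-1) 1 := by
  rw [← range_tanh]
  refine Function.Surjective.range_comp (fun y => ⟨(y + b) / c, ?_⟩) tanh
  field_simp
  ring

theorem deriv_mul_tanh_mul_sub_add (a b c k τ : ℝ) :
    deriv (fun τ => a * tanh (c * τ - b) + k) τ = a * c * (1 - tanh (c * τ - b) ^ 2) := by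
  have hinner : HasDerivAt (fun τ => c * τ - b) c τ := by
    simpa using ((hasDerivAt_id τ).const_mul c).sub_const b
  have h : HasDerivAt (fun τ => a * tanh (c * τ - b) + k)
      (a * ((1 - tanh (c * τ - b) ^ 2) * c)) τ :=
    (((hasDerivAt_tanh _).comp τ hinner).const_mul a).add_const k
  rw [h.deriv]
  ring

theorem iSup_comp_eq_of_isMaxOn {α β : Type*} [ConditionallyCompleteLinearOrder β]
    {f : ℝ → β} {u : α → ℝ} {s : Set ℝ} {x : ℝ}
    (hmax : IsMaxOn f s x) (hu : range u ⊆ s) (hx : x ∈ range u) :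
    ⨆ i, f (u i) = f x := by
  obtain ⟨i, rfl⟩ := hx
  refine IsGreatest.csSup_eq ⟨⟨i, rfl⟩, ?_⟩
  rintro _ ⟨j, rfl⟩
  exact hmax (hu ⟨j, rfl⟩)

theorem exists_mem_Ioo_isMaxOn_of_nonneg_of_eq_zero {f : ℝ → ℝ} {a b : ℝ} (hab : a < b)
    (hf : ContinuousOn f (Icc a b)) (hnonneg : ∀ x ∈ Icc a b, 0 ≤ f x)
    (ha : f a = 0) (hb : f b = 0) : ∃ c ∈ Ioo a b, IsMaxOn f (Icc a b) c := by
  obtain ⟨c, hc, hmax⟩ := isCompact_Icc.exists_isMaxOn (nonempty_Icc.mpr hab.le) hf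
  by_cases hint : c ∈ Ioo a b
  · exact ⟨c, hint, hmax⟩
  -- a maximum at an endpoint is `0`, so `f` vanishes on `[a, b]` and the midpoint is a maximum too
  have hfc : f c = 0 := by
    rcases eq_endpoints_or_mem_Ioo_of_mem_Icc hc with rfl | rfl | h
    exacts [ha, hb, absurd h hint]
  have hmid : (a + b) / 2 ∈ Ioo a b := ⟨by linarith, by linarith⟩
  refine ⟨_, hmid, fun x hx => ?_⟩
  calc f x ≤ f c := hmax hx
    _ = 0 := hfc
    _ ≤ f ((a + b) / 2) := hnonneg _ (Ioo_subset_Icc_self hmid)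

def accelProfile (c₁ d₁ d₄ h : ℝ) : ℝ :=
  (c₁ * (d₁ * h + d₄) * (1 - h ^ 2)) ^ 2 + (d₁ * (1 - h ^ 2)) ^ 2

def accelCubic (c₁ d₁ d₄ h : ℝ) : ℝ :=
  -3 * c₁ ^ 2 * d₁ ^ 2 * h ^ 3 - 5 * c₁ ^ 2 * d₁ * d₄ * h ^ 2 +
    (c₁ ^ 2 * d₁ ^ 2 - 2 * c₁ ^ 2 * d₄ ^ 2 - 2 * d₁ ^ 2) * h + c₁ ^ 2 * d₁ * d₄

section AccelProfile

variable (c₁ d₁ d₄ : ℝ)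

theorem accelProfile_nonneg (h : ℝ) : 0 ≤ accelProfile c₁ d₁ d₄ h := by
  unfold accelProfile
  positivity

theorem continuous_accelProfile : Continuous (accelProfile c₁ d₁ d₄) := by
  unfold accelProfile
  fun_prop

theorem hasDerivAt_accelProfile (h : ℝ) :
    HasDerivAt (accelProfile c₁ d₁ d₄) (2 * (1 - h ^ 2) * accelCubic c₁ d₁ d₄ h) h := by
  have hbump : HasDerivAt (fun h : ℝ => 1 - h ^ 2) (-(2 * h)) h := by
    simpa using (hasDerivAt_pow 2 h).const_sub 1
  have hlin : HasDerivAt (fun h : ℝ => c₁ * (d₁ * h + d₄)) (c₁ * d₁) h := by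
    simpa using (((hasDerivAt_id h).const_mul d₁).add_const d₄).const_mul c₁
  refine (((hlin.mul hbump).pow 2).add ((hbump.const_mul d₁).pow 2)).congr_deriv ?_
  simp only [accelCubic, Pi.mul_apply]
  ring

theorem exists_mem_Ioo_isMaxOn_accelProfile :
    ∃ h ∈ Ioo (-1 : ℝ) 1, IsMaxOn (accelProfile c₁ d₁ d₄) (Icc (-1) 1) h :=
  exists_mem_Ioo_isMaxOn_of_nonneg_of_eq_zero (by norm_num)
    (continuous_accelProfile c₁ d₁ d₄).continuousOn (fun h _ => accelProfile_nonneg c₁ d₁ d₄ h)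
    (by simp [accelProfile]) (by simp [accelProfile])

theorem accelCubic_eq_zero_of_isMaxOn {h : ℝ} (hmem : h ∈ Ioo (-1 : ℝ) 1)
    (hmax : IsMaxOn (accelProfile c₁ d₁ d₄) (Icc (-1) 1) h) : accelCubic c₁ d₁ d₄ h = 0 := by
  have hcrit := (hmax.isLocalMax (Icc_mem_nhds hmem.1 hmem.2)).hasDerivAt_eq_zero
    (hasDerivAt_accelProfile c₁ d₁ d₄ h)
  have hpos : 0 < 2 * (1 - h ^ 2) := by nlinarith [hmem.1, hmem.2]
  simpa [hpos.ne'] using hcrit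

end AccelProfile

/-- The supremum over `τ ∈ ℝ` of the squared acceleration magnitude
`g(τ) = v(τ)²·φ′(τ)² + v′(τ)²` of the sigmoid trajectory equals `c₂²` times the maximum of
`S(h) = (c₁·(d₁h + d₄)·(1 − h²))² + (d₁·(1 − h²))²` over `[−1, 1]`; moreover, if
`(d₁, c₁·d₄) ≠ (0, 0)` this maximum is attained at an interior point `h* ∈ (−1, 1)` which
is a root of the cubic `P`. -/
theorem sup_sigmoid_acceleration_eq_max_S
    (c₁ c₂ c₃ c₄ d₁ d₄ : ℝ) (hc₂ : 0 < c₂)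
    (φ v g S P : ℝ → ℝ)
    (hφ : ∀ τ, φ τ = c₁ * Real.tanh (c₂ * τ - c₃) + c₄)
    (hv : ∀ τ, v τ = d₁ * Real.tanh (c₂ * τ - c₃) + d₄)
    (hS : ∀ h, S h = (c₁ * (d₁ * h + d₄) * (1 - h ^ 2)) ^ 2 + (d₁ * (1 - h ^ 2)) ^ 2)
    (hP : ∀ h, P h = -3 * c₁ ^ 2 * d₁ ^ 2 * h ^ 3 - 5 * c₁ ^ 2 * d₁ * d₄ * h ^ 2 +
      (c₁ ^ 2 * d₁ ^ 2 - 2 * c₁ ^ 2 * d₄ ^ 2 - 2 * d₁ ^ 2) * h + c₁ ^ 2 * d₁ * d₄)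
    (hg : ∀ τ, g τ = (v τ) ^ 2 * (deriv φ τ) ^ 2 + (deriv v τ) ^ 2) :
    (⨆ τ : ℝ, g τ) = c₂ ^ 2 * sSup (S '' Set.Icc (-1 : ℝ) 1) ∧
    ((d₁, c₁ * d₄) ≠ (0, 0) →
      ∃ hstar ∈ Set.Ioo (-1 : ℝ) 1,
        IsGreatest (S '' Set.Icc (-1 : ℝ) 1) (S hstar) ∧ P hstar = 0) := by
  obtain rfl : S = accelProfile c₁ d₁ d₄ := funext hS
  obtain rfl : P = accelCubic c₁ d₁ d₄ := funext hP
  obtain rfl : φ = fun τ => c₁ * tanh (c₂ * τ - c₃) + c₄ := funext hφ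
  obtain rfl : v = fun τ => d₁ * tanh (c₂ * τ - c₃) + d₄ := funext hv
  have hg_eq : g = fun τ => c₂ ^ 2 * accelProfile c₁ d₁ d₄ (tanh (c₂ * τ - c₃)) := by
    ext τ
    rw [hg, deriv_mul_tanh_mul_sub_add, deriv_mul_tanh_mul_sub_add, accelProfile]
    ring
  have hrange := range_tanh_mul_sub hc₂.ne' c₃
  obtain ⟨hstar, hmem, hmax⟩ := exists_mem_Ioo_isMaxOn_accelProfile c₁ d₁ d₄
  have hgreatest : IsGreatest (accelProfile c₁ d₁ d₄ '' Icc (-1) 1) (accelProfile c₁ d₁ d₄ hstar) :=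
    ⟨mem_image_of_mem _ (Ioo_subset_Icc_self hmem), forall_mem_image.2 fun _ hx => hmax hx⟩
  refine ⟨?_, fun _ => ⟨hstar, hmem, hgreatest, accelCubic_eq_zero_of_isMaxOn c₁ d₁ d₄ hmem hmax⟩⟩
  rw [hg_eq, ← Real.mul_iSup_of_nonneg (sq_nonneg c₂), hgreatest.csSup_eq,
    iSup_comp_eq_of_isMaxOn hmax (hrange ▸ Ioo_subset_Icc_self) (hrange ▸ hmem)]
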